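/- arXiv:1601.04604 — 4 statements merged into one kernel-verified Lean document; each statement's English description precedes it below -/
import Mathlib

section
/- Let P be a polynomial in d real variables such that the gradient ∇P does not vanish on the zero set Z = {ξ ∈ ℝ^d : P(ξ) = 0}. If φ ∈ C_0^∞(ℝ^d) vanishes on Z, then the quotient φ/P extends to a function in C_0^∞(ℝ^d). -/
/-!
Near a zero `x₀` of `p`, with `L = Dp(x₀)` and `L u = 1`, the map
`G x = (x - x₀) + (p x - L (x - x₀)) • u` is a local diffeomorphism with `L ∘ G = p`. In
the coordinates `y = G x` the function `φ ∘ G⁻¹`, cut off near `0`, vanishes on `ker L`, and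
Hadamard's formula `F y = L y • ∫₀¹ DF (y + ((s - 1) * L y) • u) u ds` divides it by `L y`.
Away from the zeros, `φ / p` is already smooth. The admissible values `{v | φ x = p x • v}` are
convex, so a partition of unity glues these local quotients into a smooth `h` with `φ = p • h`,
and a bump function equal to `1` on the support of `φ` makes `h` compactly supported.
-/

open Filter Metric Set
open scoped Topology ContDiff Manifold

theorem MvPolynomial.contDiff_eval {σ 𝕜 : Type*} [Fintype σ] [NontriviallyNormedField 𝕜]
    {n : WithTop ℕ∞} (P : MvPolynomial σ 𝕜) : ContDiff 𝕜 n fun x : σ → 𝕜 => eval x P := by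
  induction P using MvPolynomial.induction_on with
  | C a => simpa using contDiff_const
  | add p q hp hq => simpa using hp.add hq
  | mul_X p i hp => simpa using hp.mul (contDiff_apply 𝕜 𝕜 i)

universe u

section ParametricIntegral

variable {H F : Type u} [NormedAddCommGroup H] [NormedSpace ℝ H] [NormedAddCommGroup F]
  [NormedSpace ℝ F]

theorem hasFDerivAt_parametric_intervalIntegral [ProperSpace H] {f : H × ℝ → F}
    (hf : ContDiff ℝ 1 f) (a b : ℝ) (y₀ : H) :
    HasFDerivAt (fun y => ∫ s in a..b, f (y, s))
      (∫ s in a..b, fderiv ℝ f (y₀, s) ∘L .inl ℝ H ℝ) y₀ := by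
  set f' : H × ℝ → H →L[ℝ] F := fun z => fderiv ℝ f z ∘L .inl ℝ H ℝ
  have hf' : Continuous f' := by
    have := hf.continuous_fderiv one_ne_zero
    fun_prop
  obtain ⟨M, hM⟩ : ∃ M, ∀ z ∈ closedBall y₀ 1 ×ˢ uIcc a b, ‖f' z‖ ≤ M :=
    ((isCompact_closedBall y₀ 1).prod isCompact_uIcc).exists_bound_of_continuousOn
      hf'.continuousOn
  have hderiv (y : H) (s : ℝ) : HasFDerivAt (fun y => f (y, s)) (f' (y, s)) y :=
    ((hf.differentiable one_ne_zero (y, s)).hasFDerivAt).comp y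
      ((hasFDerivAt_id y).prodMk (hasFDerivAt_const s y))
  exact intervalIntegral.hasFDerivAt_integral_of_dominated_of_fderiv_le (bound := fun _ => M)
    (ball_mem_nhds y₀ one_pos)
    (Eventually.of_forall fun y => (hf.continuous.comp (.prodMk_right y)).aestronglyMeasurable)
    ((hf.continuous.comp (.prodMk_right y₀)).intervalIntegrable a b)
    (hf'.comp (.prodMk_right y₀)).aestronglyMeasurable
    (Eventually.of_forall fun s hs y hy =>
      hM (y, s) ⟨ball_subset_closedBall hy, uIoc_subset_uIcc hs⟩)
    intervalIntegrable_const
    (Eventually.of_forall fun s _ y _ => hderiv y s)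

-- `H` and `F` share a universe so that the induction can pass from `F` to `H →L[ℝ] F`.
theorem contDiff_parametric_intervalIntegral_of_nat [ProperSpace H] (n : ℕ) :
    ∀ {F : Type u} [NormedAddCommGroup F] [NormedSpace ℝ F] {f : H × ℝ → F},
      ContDiff ℝ n f → ∀ a b : ℝ, ContDiff ℝ n fun y => ∫ s in a..b, f (y, s) := by
  induction n with
  | zero =>
    intro F _ _ f hf a b
    exact contDiff_zero.2 <|
      intervalIntegral.continuous_parametric_intervalIntegral_of_continuous'
        (f := fun y s => f (y, s)) (contDiff_zero.1 hf) a b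
  | succ n ih =>
    intro F _ _ f hf a b
    have hf1 : ContDiff ℝ 1 f := hf.of_le (by exact_mod_cast Nat.le_add_left 1 n)
    refine contDiff_succ_iff_hasFDerivAt.2
      ⟨_, ih (f := fun z => fderiv ℝ f z ∘L .inl ℝ H ℝ) ?_ a b,
        hasFDerivAt_parametric_intervalIntegral hf1 a b⟩
    exact ((ContinuousLinearMap.compL ℝ H (H × ℝ) F).flip (.inl ℝ H ℝ)).contDiff.comp
      (hf.fderiv_right (by push_cast; exact le_rfl))

theorem contDiff_parametric_intervalIntegral [ProperSpace H] {n : ℕ∞} {f : H × ℝ → F}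
    (hf : ContDiff ℝ n f) (a b : ℝ) : ContDiff ℝ n fun y => ∫ s in a..b, f (y, s) :=
  contDiff_iff_forall_nat_le.2 fun m hm =>
    contDiff_parametric_intervalIntegral_of_nat m (hf.of_le (by exact_mod_cast hm)) a b

end ParametricIntegral

theorem ContDiff.exists_contDiffOn_localInverse {𝕂 E F : Type*} [RCLike 𝕂]
    [NormedAddCommGroup E] [NormedSpace 𝕂 E] [CompleteSpace E]
    [NormedAddCommGroup F] [NormedSpace 𝕂 F] {n : WithTop ℕ∞} {f : E → F}
    (hf : ContDiff 𝕂 n f) (hn : n ≠ 0) {f' : E ≃L[𝕂] F} {a : E}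
    (hf' : HasFDerivAt f (f' : E →L[𝕂] F) a) :
    ∃ g : F → E, ∃ W : Set F, IsOpen W ∧ f a ∈ W ∧ ContDiffOn 𝕂 n g W ∧
      (∀ y ∈ W, f (g y) = y) ∧ ∀ᶠ x in 𝓝 a, g (f x) = x := by
  set e := hf.contDiffAt.toOpenPartialHomeomorph f hf' hn
  have ha : a ∈ e.source := hf.contDiffAt.mem_toOpenPartialHomeomorph_source hf' hn
  set S := e.source ∩ fderiv 𝕂 f ⁻¹' range ((↑) : (E ≃L[𝕂] F) → E →L[𝕂] F)
  have hS : IsOpen S :=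
    e.open_source.inter (ContinuousLinearEquiv.isOpen.preimage (hf.continuous_fderiv hn))
  refine ⟨e.symm, e.target ∩ e.symm ⁻¹' S, e.isOpen_inter_preimage_symm hS,
    ⟨e.map_source ha, ?_⟩, fun y hy => ?_, fun y hy => e.right_inv hy.1,
    e.eventually_left_inverse ha⟩
  · rw [mem_preimage, show e.symm (f a) = a from e.left_inv ha]
    exact ⟨ha, f', hf'.fderiv.symm⟩
  · obtain ⟨f'', hf''⟩ := hy.2.2
    have hderiv : HasFDerivAt f (f'' : E →L[𝕂] F) (e.symm y) :=
      hf'' ▸ (hf.differentiable hn _).hasFDerivAt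
    exact (e.contDiffAt_symm hy.1 hderiv hf.contDiffAt).contDiffWithinAt

theorem ContDiffOn.smul_of_tsupport_subset {E V : Type*} [NormedAddCommGroup E]
    [NormedSpace ℝ E] [NormedAddCommGroup V] [NormedSpace ℝ V] {n : WithTop ℕ∞} {θ : E → ℝ}
    {f : E → V} {U : Set E}
    (hθ : ContDiff ℝ n θ) (hf : ContDiffOn ℝ n f U) (hU : IsOpen U) (hθU : tsupport θ ⊆ U) :
    ContDiff ℝ n fun x => θ x • f x := by
  refine contDiff_iff_contDiffAt.2 fun x => ?_
  by_cases hx : x ∈ U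
  · exact hθ.contDiffAt.smul (hf.contDiffAt (hU.mem_nhds hx))
  · refine (contDiffAt_const (c := (0 : V))).congr_of_eventuallyEq ?_
    filter_upwards [notMem_tsupport_iff_eventuallyEq.1 fun h => hx (hθU h)] with y hy
    simp [hy]

section Division

variable {E V : Type u} [NormedAddCommGroup E] [NormedSpace ℝ E] [NormedAddCommGroup V]
  [NormedSpace ℝ V]

theorem exists_contDiff_eq_smul_of_eq_zero_on_ker [ProperSpace E] [CompleteSpace V] {F : E → V}
    (hF : ContDiff ℝ ∞ F) {ℓ : E →L[ℝ] ℝ} {u : E} (hu : ℓ u = 1)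
    (hker : ∀ y, ℓ y = 0 → F y = 0) :
    ∃ g : E → V, ContDiff ℝ ∞ g ∧ ∀ y, F y = ℓ y • g y := by
  set γ : E × ℝ → E := fun z => z.1 + ((z.2 - 1) * ℓ z.1) • u
  have hγ : ContDiff ℝ ∞ γ := by fun_prop
  have hF' : ContDiff ℝ ∞ fun z => fderiv ℝ F (γ z) u :=
    ((hF.fderiv_right (by simp)).comp hγ).clm_apply contDiff_const
  refine ⟨fun y => ∫ s in (0 : ℝ)..1, fderiv ℝ F (γ (y, s)) u,
    contDiff_parametric_intervalIntegral hF' 0 1, fun y => ?_⟩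
  have hderiv (s : ℝ) :
      HasDerivAt (fun s => F (γ (y, s))) (ℓ y • fderiv ℝ F (γ (y, s)) u) s := by
    have hline : HasDerivAt (fun s : ℝ => γ (y, s)) (ℓ y • u) s := by
      simpa [γ] using ((((hasDerivAt_id s).sub_const 1).mul_const (ℓ y)).smul_const u).const_add y
    rw [← map_smul]
    exact ((hF.differentiable (by simp) _).hasFDerivAt).comp_hasDerivAt s hline
  have hint := intervalIntegral.integral_eq_sub_of_hasDerivAt (fun s _ => hderiv s)
    ((hF'.continuous.comp (.prodMk_right y)).const_smul (ℓ y) |>.intervalIntegrable 0 1)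
  have hzero : F (γ (y, 0)) = 0 := hker _ (by simp [γ, hu])
  rw [hzero, sub_zero, intervalIntegral.integral_smul] at hint
  simpa [γ] using hint.symm

theorem exists_contDiff_eventually_eq_smul_of_fderiv_ne_zero [FiniteDimensional ℝ E]
    [CompleteSpace V] {p : E → ℝ} (hp : ContDiff ℝ ∞ p) {φ : E → V} (hφ : ContDiff ℝ ∞ φ)
    (hvanish : ∀ x, p x = 0 → φ x = 0) {x₀ : E} (hx₀ : p x₀ = 0) (hp' : fderiv ℝ p x₀ ≠ 0) :
    ∃ h : E → V, ContDiff ℝ ∞ h ∧ ∀ᶠ x in 𝓝 x₀, φ x = p x • h x := by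
  set L := fderiv ℝ p x₀
  obtain ⟨u, hu⟩ : ∃ u, L u = 1 := by
    obtain ⟨v, hv⟩ := DFunLike.ne_iff.1 hp'
    exact ⟨(L v)⁻¹ • v, by simpa using inv_mul_cancel₀ hv⟩
  set G : E → E := fun x => (x - x₀) + (p x - L (x - x₀)) • u
  have hG : ContDiff ℝ ∞ G := by fun_prop
  have hLG (x : E) : L (G x) = p x := by simp [G, hu]
  have hG₀ : G x₀ = 0 := by simp [G, hx₀]
  have hG' : HasFDerivAt G ((ContinuousLinearEquiv.refl ℝ E : E ≃L[ℝ] E) : E →L[ℝ] E) x₀ := by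
    have hp₀ : HasFDerivAt p L x₀ := (hp.differentiable (by simp) x₀).hasFDerivAt
    have hL : HasFDerivAt (fun x => L (x - x₀)) L x₀ := by
      simpa using L.hasFDerivAt.sub_const (L x₀)
    exact (((hasFDerivAt_id x₀).sub_const x₀).add ((hp₀.sub hL).smul_const u)).congr_fderiv
      (by ext v; simp)
  obtain ⟨N, W, hW, hG₀W, hN, hGN, hNG⟩ := hG.exists_contDiffOn_localInverse (by simp) hG'
  rw [hG₀] at hG₀W
  obtain ⟨r, hr, hrW⟩ := Metric.isOpen_iff.1 hW 0 hG₀W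
  let θ : ContDiffBump (0 : E) := ⟨r / 4, r / 2, by positivity, by linarith⟩
  have hθW : tsupport θ ⊆ W := by
    rw [θ.tsupport_eq]
    exact (closedBall_subset_ball (half_lt_self hr)).trans hrW
  set F : E → V := fun y => θ y • φ (N y)
  have hF : ContDiff ℝ ∞ F := (hφ.comp_contDiffOn hN).smul_of_tsupport_subset θ.contDiff hW hθW
  have hFker (y : E) (hy : L y = 0) : F y = 0 := by
    by_cases hyW : y ∈ W
    · simp [F, hvanish _ (by rw [← hLG, hGN y hyW, hy])]
    · simp [F, image_eq_zero_of_notMem_tsupport fun h => hyW (hθW h)]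
  obtain ⟨g, hg, hFg⟩ := exists_contDiff_eq_smul_of_eq_zero_on_ker hF hu hFker
  have hθG : ∀ᶠ x in 𝓝 x₀, θ (G x) = 1 := by
    have hGx₀ := hG.continuous.tendsto x₀
    rw [hG₀] at hGx₀
    exact hGx₀.eventually θ.eventuallyEq_one
  refine ⟨g ∘ G, hg.comp hG, ?_⟩
  filter_upwards [hθG, hNG] with x hθx hNx
  calc φ x = F (G x) := by simp [F, hθx, hNx]
    _ = p x • g (G x) := by rw [hFg, hLG]

theorem exists_contDiff_eq_smul_of_local [FiniteDimensional ℝ E] {p : E → ℝ} {φ : E → V}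
    (hloc : ∀ x, ∃ U ∈ 𝓝 x, ∃ h : E → V, ContDiffOn ℝ ∞ h U ∧ ∀ y ∈ U, φ y = p y • h y) :
    ∃ h : E → V, ContDiff ℝ ∞ h ∧ ∀ x, φ x = p x • h x := by
  have hconv (x : E) : Convex ℝ {v : V | φ x = p x • v} := by
    convert (convex_singleton (φ x)).linear_preimage (p x • LinearMap.id (R := ℝ) (M := V))
    ext v
    simp [eq_comm]
  obtain ⟨h, hh⟩ := exists_contMDiffMap_forall_mem_convex_of_local 𝓘(ℝ, E) hconv fun x =>
    let ⟨U, hU, h, hhU, hφh⟩ := hloc x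
    ⟨U, hU, h, hhU.contMDiffOn, hφh⟩
  exact ⟨h, contMDiff_iff_contDiff.1 h.contMDiff, hh⟩

theorem exists_contDiff_eq_smul_of_fderiv_ne_zero [FiniteDimensional ℝ E] [CompleteSpace V]
    {p : E → ℝ} (hp : ContDiff ℝ ∞ p) {φ : E → V} (hφ : ContDiff ℝ ∞ φ)
    (hvanish : ∀ x, p x = 0 → φ x = 0) (hp' : ∀ x, p x = 0 → fderiv ℝ p x ≠ 0) :
    ∃ h : E → V, ContDiff ℝ ∞ h ∧ ∀ x, φ x = p x • h x := by
  refine exists_contDiff_eq_smul_of_local fun x => ?_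
  by_cases hx : p x = 0
  · obtain ⟨h, hh, hφh⟩ :=
      exists_contDiff_eventually_eq_smul_of_fderiv_ne_zero hp hφ hvanish hx (hp' x hx)
    exact ⟨_, hφh, h, hh.contDiffOn, fun _ hy => hy⟩
  · exact ⟨_, (isOpen_ne_fun hp.continuous continuous_const).mem_nhds hx,
      fun y => (p y)⁻¹ • φ y, (hp.contDiffOn.inv fun _ hy => hy).smul hφ.contDiffOn,
      fun _ hy => (smul_inv_smul₀ hy _).symm⟩

end Division

/-- Division lemma: if `P` is a polynomial in `d` real variables whose gradient does not
vanish on its zero set, and `φ ∈ C_0^∞(ℝ^d)` vanishes on the zero set of `P`, then the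
quotient `φ / P` extends to a smooth compactly supported function on `ℝ^d`. -/
theorem smooth_div_polynomial (d : ℕ) (P : MvPolynomial (Fin d) ℝ)
    (hgrad : ∀ ξ : Fin d → ℝ, MvPolynomial.eval ξ P = 0 →
      fderiv ℝ (fun x : Fin d → ℝ => MvPolynomial.eval x P) ξ ≠ 0)
    (φ : (Fin d → ℝ) → ℂ) (hφ : ContDiff ℝ (⊤ : ℕ∞) φ) (hφsupp : HasCompactSupport φ)
    (hvanish : ∀ ξ : Fin d → ℝ, MvPolynomial.eval ξ P = 0 → φ ξ = 0) :
    ∃ ψ : (Fin d → ℝ) → ℂ, ContDiff ℝ (⊤ : ℕ∞) ψ ∧ HasCompactSupport ψ ∧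
      ∀ ξ : Fin d → ℝ, MvPolynomial.eval ξ P ≠ 0 →
        ψ ξ = φ ξ / (MvPolynomial.eval ξ P : ℂ) := by
  obtain ⟨h, hh, hφh⟩ :=
    exists_contDiff_eq_smul_of_fderiv_ne_zero (MvPolynomial.contDiff_eval P) hφ hvanish hgrad
  obtain ⟨R, hR, hφR⟩ := hφsupp.isCompact.isBounded.subset_closedBall_lt 0 0
  let χ : ContDiffBump (0 : Fin d → ℝ) := ⟨R, R + 1, hR, by linarith⟩
  have hχφ (x : Fin d → ℝ) : χ x • φ x = φ x := by
    by_cases hx : x ∈ tsupport φ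
    · rw [χ.one_of_mem_closedBall (hφR hx), one_smul]
    · rw [image_eq_zero_of_notMem_tsupport hx, smul_zero]
  refine ⟨fun x => χ x • h x, χ.contDiff.smul hh, χ.hasCompactSupport.smul_right,
    fun ξ hξ => ?_⟩
  rw [eq_div_iff (by exact_mod_cast hξ), ← hχφ ξ, hφh ξ]
  simp only [Complex.real_smul]
  ring
end

section
/- Let α ∈ (0,d) and let ν be a finite complex measure on ℝ^d with I(ν,α) = ∫ |𝓕^{-1}[ν](x)|² (1+|x|)^{α−d} dx < ∞. Let φ ∈ C_0^∞(ℝ^d) and φ_r(ξ) = φ(ξ/r). Then for all r ∈ (0,1] and all η ∈ ℝ^d, |∫ φ_r(ξ+η) dν(ξ)| ≤ C · I(ν,α)^{1/2} · r^{α/2}, where C depends only on φ, d, α. -/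
/-!
Write `ν = f dμ`. By the multiplication formula for the Fourier transform and Fourier inversion
for the Schwartz function `ψ = φ_r(· + η)`, `∫ ψ dν = ∫ 𝓕ψ · 𝓕⁻¹[ν]`. Cauchy–Schwarz with the
weights `(1 + |x|)^(d - α)` and `(1 + |x|)^(α - d)` bounds this by `I(ν,α)^(1/2)` times the
square root of `∫ |𝓕ψ|² (1 + |x|)^(d - α)`. Since `|𝓕ψ(x)| = r^d |𝓕φ(r x)|` and
`1 + |z / r| ≤ (1 + |z|) / r` for `r ≤ 1`, the substitution `z = r x` bounds that integral by
`r^α ∫ |𝓕φ|² (1 + |z|)^(d - α)`, which is finite because `𝓕φ` is a Schwartz function.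
-/

open MeasureTheory
open scoped RealInnerProductSpace

noncomputable section

/-- The inverse Fourier transform `𝓕⁻¹[ν](x) = ∫ e^{2πi⟨x,ξ⟩} dν(ξ)` of the complex
measure `ν = f dμ` (`μ` a finite measure, `f` integrable). -/
def invFourierMeasure {d : ℕ} (μ : Measure (EuclideanSpace ℝ (Fin d)))
    (f : EuclideanSpace ℝ (Fin d) → ℂ) : EuclideanSpace ℝ (Fin d) → ℂ :=
  fun x => ∫ ξ, Complex.exp (2 * Real.pi * Complex.I * (⟪x, ξ⟫ : ℝ)) * f ξ ∂μ

open scoped FourierTransform SchwartzMap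

theorem continuous_one_add_norm_rpow {E : Type*} [SeminormedAddCommGroup E] (β : ℝ) :
    Continuous fun x : E => (1 + ‖x‖) ^ β :=
  (continuous_const.add continuous_norm).rpow_const fun x =>
    .inl (add_pos_of_pos_of_nonneg one_pos (norm_nonneg x)).ne'

namespace SchwartzMap

variable {D E : Type*} [NormedAddCommGroup D] [NormedSpace ℝ D] [NormedAddCommGroup E]
  [NormedSpace ℝ E]

theorem exists_one_add_norm_pow_mul_le (s : 𝓢(D, E)) (n : ℕ) :
    ∃ C, ∀ x, (1 + ‖x‖) ^ n * ‖s x‖ ≤ C :=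
  ⟨_, fun x => by
    simpa using one_add_le_sup_seminorm_apply (𝕜 := ℝ) (m := (n, 0)) le_rfl le_rfl s x⟩

theorem integrable_norm_sq_mul_one_add_norm_rpow [MeasurableSpace D] [BorelSpace D]
    [SecondCountableTopology D] {μ : Measure D} [μ.HasTemperateGrowth] (s : 𝓢(D, E)) (β : ℝ) :
    Integrable (fun x => ‖s x‖ ^ 2 * (1 + ‖x‖) ^ β) μ := by
  obtain ⟨C, hC⟩ := s.exists_one_add_norm_pow_mul_le ⌈β⌉₊
  refine (s.integrable.norm.const_mul C).mono'
    ((s.continuous.norm.pow 2).mul (continuous_one_add_norm_rpow β)).aestronglyMeasurable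
    (.of_forall fun x => ?_)
  have hβ : (1 + ‖x‖) ^ β ≤ (1 + ‖x‖) ^ ⌈β⌉₊ := by
    rw [← Real.rpow_natCast]
    exact Real.rpow_le_rpow_of_exponent_le (by simp) (Nat.le_ceil β)
  rw [Real.norm_of_nonneg (by positivity)]
  calc ‖s x‖ ^ 2 * (1 + ‖x‖) ^ β = ((1 + ‖x‖) ^ β * ‖s x‖) * ‖s x‖ := by ring
    _ ≤ ((1 + ‖x‖) ^ ⌈β⌉₊ * ‖s x‖) * ‖s x‖ := by gcongr
    _ ≤ C * ‖s x‖ := by gcongr; exact hC x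

end SchwartzMap

section Dilation

variable {V : Type*} [NormedAddCommGroup V] [NormedSpace ℝ V] {r β : ℝ}

theorem one_add_norm_inv_smul_rpow_le (hr : 0 < r) (hr1 : r ≤ 1) (hβ : 0 ≤ β) (z : V) :
    (1 + ‖r⁻¹ • z‖) ^ β ≤ r ^ (-β) * (1 + ‖z‖) ^ β := by
  have hle : 1 + ‖r⁻¹ • z‖ ≤ r⁻¹ * (1 + ‖z‖) := by
    rw [norm_smul, Real.norm_of_nonneg (inv_nonneg.2 hr.le), mul_add, mul_one]
    gcongr
    exact one_le_inv_iff₀.2 ⟨hr, hr1⟩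
  calc (1 + ‖r⁻¹ • z‖) ^ β ≤ (r⁻¹ * (1 + ‖z‖)) ^ β := by gcongr
    _ = r ^ (-β) * (1 + ‖z‖) ^ β := by
      rw [Real.mul_rpow (by positivity) (by positivity), Real.inv_rpow hr.le, Real.rpow_neg hr.le]

variable [MeasurableSpace V] [BorelSpace V] [FiniteDimensional ℝ V] (μ : Measure V)
  [μ.IsAddHaarMeasure]

theorem integral_comp_smul_mul_one_add_norm_rpow_le {G : V → ℝ} (hG : ∀ z, 0 ≤ G z)
    (hGi : Integrable (fun z => G z * (1 + ‖z‖) ^ β) μ) (hr : 0 < r) (hr1 : r ≤ 1)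
    (hβ : 0 ≤ β) :
    ∫ x, G (r • x) * (1 + ‖x‖) ^ β ∂μ ≤
      r ^ (-(Module.finrank ℝ V : ℝ) - β) * ∫ z, G z * (1 + ‖z‖) ^ β ∂μ := by
  have hcomp : ∫ x, G (r • x) * (1 + ‖x‖) ^ β ∂μ =
      (r ^ Module.finrank ℝ V)⁻¹ * ∫ z, G z * (1 + ‖r⁻¹ • z‖) ^ β ∂μ := by
    rw [← smul_eq_mul, ← Measure.integral_comp_smul_of_nonneg μ _ r (hR := hr.le)]
    simp only [inv_smul_smul₀ hr.ne']
  have hweight : ∫ z, G z * (1 + ‖r⁻¹ • z‖) ^ β ∂μ ≤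
      r ^ (-β) * ∫ z, G z * (1 + ‖z‖) ^ β ∂μ := by
    rw [← integral_const_mul]
    refine integral_mono_of_nonneg (.of_forall fun z => by have := hG z; positivity)
      (hGi.const_mul _) (.of_forall fun z => ?_)
    calc G z * (1 + ‖r⁻¹ • z‖) ^ β ≤ G z * (r ^ (-β) * (1 + ‖z‖) ^ β) :=
          mul_le_mul_of_nonneg_left (one_add_norm_inv_smul_rpow_le hr hr1 hβ z) (hG z)
      _ = r ^ (-β) * (G z * (1 + ‖z‖) ^ β) := by ring
  rw [hcomp, Real.rpow_sub hr, Real.rpow_neg hr.le, Real.rpow_natCast, div_eq_mul_inv,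
    ← Real.rpow_neg hr.le, mul_assoc]
  gcongr

end Dilation

namespace Real

variable {V E : Type*} [NormedAddCommGroup V] [InnerProductSpace ℝ V] [FiniteDimensional ℝ V]
  [MeasurableSpace V] [BorelSpace V] [NormedAddCommGroup E] [NormedSpace ℂ E]

theorem norm_fourier_comp_add_right (f : V → E) (v₀ w : V) :
    ‖𝓕 (fun v => f (v + v₀)) w‖ = ‖𝓕 f w‖ := by
  have h := congrFun (VectorFourier.fourierIntegral_comp_add_right 𝐞 volume (innerₗ V) f v₀) w
  rw [← Circle.norm_smul (𝐞 ⟪v₀, w⟫) (𝓕 f w)]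
  exact congrArg (‖·‖) h

theorem fourier_comp_inv_smul (f : V → E) {r : ℝ} (hr : 0 < r) (w : V) :
    𝓕 (fun v => f (r⁻¹ • v)) w = r ^ Module.finrank ℝ V • 𝓕 f (r • w) := by
  simp only [fourier_eq]
  rw [← Measure.integral_comp_inv_smul_of_nonneg volume _ hr.le]
  congr 1 with v
  rw [real_inner_smul_left, real_inner_smul_right, inv_mul_cancel_left₀ hr.ne']

theorem norm_fourier_comp_inv_smul_add (f : V → E) {r : ℝ} (hr : 0 < r) (η w : V) :
    ‖𝓕 (fun v => f (r⁻¹ • (v + η))) w‖ = r ^ Module.finrank ℝ V * ‖𝓕 f (r • w)‖ := by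
  rw [norm_fourier_comp_add_right (fun v => f (r⁻¹ • v)), fourier_comp_inv_smul f hr, norm_smul,
    Real.norm_of_nonneg (by positivity)]

theorem integral_norm_fourier_comp_inv_smul_add_sq_mul_le (g : V → ℂ) {r β : ℝ} (hr : 0 < r)
    (hr1 : r ≤ 1) (hβ : 0 ≤ β) (η : V)
    (hg : Integrable (fun z => ‖𝓕 g z‖ ^ 2 * (1 + ‖z‖) ^ β)) :
    ∫ x, ‖𝓕 (fun v => g (r⁻¹ • (v + η))) x‖ ^ 2 * (1 + ‖x‖) ^ β ≤
      r ^ ((Module.finrank ℝ V : ℝ) - β) * ∫ z, ‖𝓕 g z‖ ^ 2 * (1 + ‖z‖) ^ β := by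
  set n := Module.finrank ℝ V
  calc ∫ x, ‖𝓕 (fun v => g (r⁻¹ • (v + η))) x‖ ^ 2 * (1 + ‖x‖) ^ β
      = (r ^ n) ^ 2 * ∫ x, ‖𝓕 g (r • x)‖ ^ 2 * (1 + ‖x‖) ^ β := by
        simp only [norm_fourier_comp_inv_smul_add g hr, mul_pow, ← integral_const_mul, mul_assoc]
        rfl
    _ ≤ (r ^ n) ^ 2 * (r ^ (-(n : ℝ) - β) * ∫ z, ‖𝓕 g z‖ ^ 2 * (1 + ‖z‖) ^ β) := by
        gcongr
        exact integral_comp_smul_mul_one_add_norm_rpow_le volume (fun z => by positivity) hg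
          hr hr1 hβ
    _ = r ^ ((n : ℝ) - β) * ∫ z, ‖𝓕 g z‖ ^ 2 * (1 + ‖z‖) ^ β := by
        rw [← mul_assoc, ← Real.rpow_natCast, ← Real.rpow_natCast, ← Real.rpow_mul hr.le,
          ← Real.rpow_add hr]
        congr 2
        push_cast
        ring

end Real

theorem norm_integral_mul_le_sqrt_mul_sqrt {α 𝕜 : Type*} [MeasurableSpace α] {μ : Measure α}
    [RCLike 𝕜] {g h : α → 𝕜} {w : α → ℝ} (hw : ∀ x, 0 < w x)
    (hg : AEStronglyMeasurable g μ) (hh : AEStronglyMeasurable h μ)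
    (hwm : AEStronglyMeasurable w μ) (hgw : Integrable (fun x => ‖g x‖ ^ 2 * w x) μ)
    (hhw : Integrable (fun x => ‖h x‖ ^ 2 * (w x)⁻¹) μ) :
    ‖∫ x, g x * h x ∂μ‖ ≤
      √(∫ x, ‖g x‖ ^ 2 * w x ∂μ) * √(∫ x, ‖h x‖ ^ 2 * (w x)⁻¹ ∂μ) := by
  set u : α → ℝ := fun x => ‖g x‖ * √(w x)
  set v : α → ℝ := fun x => ‖h x‖ * (√(w x))⁻¹
  have huv : ∀ x, ‖g x * h x‖ = u x * v x := fun x => by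
    have : √(w x) ≠ 0 := (Real.sqrt_pos.2 (hw x)).ne'
    simp only [u, v, norm_mul]
    field_simp
  have hu2 : ∀ x, u x ^ 2 = ‖g x‖ ^ 2 * w x := fun x => by
    simp only [u, mul_pow, Real.sq_sqrt (hw x).le]
  have hv2 : ∀ x, v x ^ 2 = ‖h x‖ ^ 2 * (w x)⁻¹ := fun x => by
    simp only [v, mul_pow, inv_pow, Real.sq_sqrt (hw x).le]
  have hsqrt : AEStronglyMeasurable (fun x => √(w x)) μ :=
    Real.continuous_sqrt.comp_aestronglyMeasurable hwm
  have hu : MemLp u (ENNReal.ofReal 2) μ := by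
    rw [ENNReal.ofReal_ofNat]
    exact (memLp_two_iff_integrable_sq (f := u) (hg.norm.mul hsqrt)).2 (by simpa only [hu2])
  have hv : MemLp v (ENNReal.ofReal 2) μ := by
    rw [ENNReal.ofReal_ofNat]
    exact (memLp_two_iff_integrable_sq (f := v)
      (hh.norm.mul hsqrt.aemeasurable.inv.aestronglyMeasurable)).2 (by simpa only [hv2])
  calc ‖∫ x, g x * h x ∂μ‖ ≤ ∫ x, u x * v x ∂μ := by
        simpa only [huv] using norm_integral_le_integral_norm (fun x => g x * h x)
    _ ≤ (∫ x, u x ^ (2 : ℝ) ∂μ) ^ (1 / 2 : ℝ) * (∫ x, v x ^ (2 : ℝ) ∂μ) ^ (1 / 2 : ℝ) :=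
        integral_mul_le_Lp_mul_Lq_of_nonneg Real.HolderConjugate.two_two
          (.of_forall fun x => by positivity) (.of_forall fun x => by positivity) hu hv
    _ = √(∫ x, ‖g x‖ ^ 2 * w x ∂μ) * √(∫ x, ‖h x‖ ^ 2 * (w x)⁻¹ ∂μ) := by
        simp only [Real.rpow_two, hu2, hv2, Real.sqrt_eq_rpow]

section InvFourierMeasure

theorem continuous_neg_innerₗ_apply {V : Type*} [NormedAddCommGroup V] [InnerProductSpace ℝ V] :
    Continuous fun p : V × V => (-innerₗ V) p.1 p.2 := by
  simp only [LinearMap.neg_apply, innerₗ_apply_apply]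
  fun_prop

variable {d : ℕ} (μ : Measure (EuclideanSpace ℝ (Fin d))) (f : EuclideanSpace ℝ (Fin d) → ℂ)

theorem invFourierMeasure_eq_fourierIntegral :
    invFourierMeasure μ f = VectorFourier.fourierIntegral 𝐞 μ (-innerₗ _) f := by
  ext x
  simp only [invFourierMeasure, VectorFourier.fourierIntegral, LinearMap.neg_apply, neg_neg,
    innerₗ_apply_apply, Circle.smul_def, Real.fourierChar_apply, real_inner_comm x, smul_eq_mul]
  congr 1 with ξ
  push_cast
  ring_nf

variable {μ f}

theorem continuous_invFourierMeasure (hf : Integrable f μ) :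
    Continuous (invFourierMeasure μ f) := by
  rw [invFourierMeasure_eq_fourierIntegral]
  exact VectorFourier.fourierIntegral_continuous Real.continuous_fourierChar
    continuous_neg_innerₗ_apply hf

theorem integral_fourier_mul_invFourierMeasure [SigmaFinite μ] (hf : Integrable f μ)
    {g : EuclideanSpace ℝ (Fin d) → ℂ} (hgc : Continuous g) (hg : Integrable g)
    (hFg : Integrable (𝓕 g)) :
    ∫ x, 𝓕 g x * invFourierMeasure μ f x = ∫ ξ, g ξ * f ξ ∂μ := by
  have hflip : (-innerₗ (EuclideanSpace ℝ (Fin d))).flip = -innerₗ _ :=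
    LinearMap.ext₂ fun x y => by simp [real_inner_comm]
  have := VectorFourier.integral_fourierIntegral_smul_eq_flip Real.continuous_fourierChar
    continuous_neg_innerₗ_apply hf hFg (L := -innerₗ _)
  rw [hflip] at this
  change _ = ∫ x, f x • 𝓕⁻ (𝓕 g) x ∂μ at this
  rw [hgc.fourierInv_fourier_eq hg hFg] at this
  rw [invFourierMeasure_eq_fourierIntegral]
  simpa only [smul_eq_mul, mul_comm] using this

end InvFourierMeasure

theorem frostman_type_bound_general {d : ℕ} (α : ℝ) (hαd : α < d)
    (μ : Measure (EuclideanSpace ℝ (Fin d))) [IsFiniteMeasure μ]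
    (f : EuclideanSpace ℝ (Fin d) → ℂ) (hf : Integrable f μ)
    (hI : Integrable (fun x => ‖invFourierMeasure μ f x‖ ^ 2 * (1 + ‖x‖) ^ (α - d))
      (volume : Measure (EuclideanSpace ℝ (Fin d))))
    (φ : EuclideanSpace ℝ (Fin d) → ℝ) (hφ : ContDiff ℝ (⊤ : ℕ∞) φ)
    (hφsupp : HasCompactSupport φ) :
    ∃ C : ℝ, 0 < C ∧ ∀ r : ℝ, 0 < r → r ≤ 1 → ∀ η : EuclideanSpace ℝ (Fin d),
      ‖∫ ξ, (φ (r⁻¹ • (ξ + η)) : ℂ) * f ξ ∂μ‖ ≤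
        C * Real.sqrt (∫ x, ‖invFourierMeasure μ f x‖ ^ 2 * (1 + ‖x‖) ^ (α - d)
            ∂(volume : Measure (EuclideanSpace ℝ (Fin d)))) * r ^ (α / 2) := by
  have hβ : 0 ≤ (d : ℝ) - α := by linarith
  set I := ∫ x, ‖invFourierMeasure μ f x‖ ^ 2 * (1 + ‖x‖) ^ (α - d)
  have hφc : ContDiff ℝ (⊤ : ℕ∞) fun ξ => (φ ξ : ℂ) := Complex.ofRealCLM.contDiff.comp hφ
  have hφcsupp : HasCompactSupport fun ξ => (φ ξ : ℂ) := hφsupp.comp_left Complex.ofReal_zero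
  set K := ∫ z, ‖𝓕 (fun ξ => (φ ξ : ℂ)) z‖ ^ 2 * (1 + ‖z‖) ^ ((d : ℝ) - α)
  refine ⟨√K + 1, by positivity, fun r hr hr1 η => ?_⟩
  let s : 𝓢(EuclideanSpace ℝ (Fin d), ℂ) :=
    ((hφcsupp.comp_smul (inv_ne_zero hr.ne')).comp_homeomorph
      (Homeomorph.addRight η)).toSchwartzMap
        (hφc.comp ((contDiff_id.add contDiff_const).const_smul r⁻¹))
  have hweight : ∀ x : EuclideanSpace ℝ (Fin d),
      ((1 + ‖x‖) ^ ((d : ℝ) - α))⁻¹ = (1 + ‖x‖) ^ (α - d) := fun x => by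
    rw [← Real.rpow_neg (by positivity), neg_sub]
  have hscale : ∫ x, ‖𝓕 s x‖ ^ 2 * (1 + ‖x‖) ^ ((d : ℝ) - α) ≤ r ^ α * K := by
    have := Real.integral_norm_fourier_comp_inv_smul_add_sq_mul_le (fun ξ => (φ ξ : ℂ))
      hr hr1 hβ η ((𝓕 (hφcsupp.toSchwartzMap hφc)).integrable_norm_sq_mul_one_add_norm_rpow _)
    rwa [finrank_euclideanSpace_fin, sub_sub_cancel] at this
  calc ‖∫ ξ, (φ (r⁻¹ • (ξ + η)) : ℂ) * f ξ ∂μ‖ = ‖∫ x, 𝓕 s x * invFourierMeasure μ f x‖ := by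
        congr 1
        exact (integral_fourier_mul_invFourierMeasure hf s.continuous s.integrable
          (𝓕 s).integrable).symm
    _ ≤ √(∫ x, ‖𝓕 s x‖ ^ 2 * (1 + ‖x‖) ^ ((d : ℝ) - α)) * √I := by
        simpa only [hweight] using norm_integral_mul_le_sqrt_mul_sqrt
          (w := fun x => (1 + ‖x‖) ^ ((d : ℝ) - α)) (fun x => by positivity)
          (𝓕 s).continuous.aestronglyMeasurable
          (continuous_invFourierMeasure hf).aestronglyMeasurable
          (continuous_one_add_norm_rpow _).aestronglyMeasurable
          ((𝓕 s).integrable_norm_sq_mul_one_add_norm_rpow _) (by simpa only [hweight] using hI)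
    _ ≤ √(r ^ α * K) * √I := by gcongr
    _ = √K * √I * r ^ (α / 2) := by
        rw [Real.sqrt_mul (by positivity), Real.sqrt_eq_rpow (r ^ α), ← Real.rpow_mul hr.le]
        ring_nf
    _ ≤ (√K + 1) * √I * r ^ (α / 2) := by gcongr; linarith

/-- Let `α ∈ (0,d)` and let `ν = f dμ` be a finite complex measure on `ℝ^d` with
`I(ν,α) = ∫ |𝓕⁻¹[ν](x)|² (1+|x|)^{α-d} dx < ∞`. Let `φ ∈ C_0^∞(ℝ^d)` and
`φ_r(ξ) = φ(ξ/r)`. Then there is a constant `C > 0` (depending only on `φ`, `d`, `α`)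
such that `|∫ φ_r(ξ+η) dν(ξ)| ≤ C · I(ν,α)^{1/2} · r^{α/2}` for all `r ∈ (0,1]`, `η`. -/
theorem frostman_type_bound {d : ℕ} (α : ℝ) (hα0 : 0 < α) (hαd : α < d)
    (μ : Measure (EuclideanSpace ℝ (Fin d))) [IsFiniteMeasure μ]
    (f : EuclideanSpace ℝ (Fin d) → ℂ) (hf : Integrable f μ)
    (hI : Integrable (fun x => ‖invFourierMeasure μ f x‖ ^ 2 * (1 + ‖x‖) ^ (α - d))
      (volume : Measure (EuclideanSpace ℝ (Fin d))))
    (φ : EuclideanSpace ℝ (Fin d) → ℝ) (hφ : ContDiff ℝ (⊤ : ℕ∞) φ)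
    (hφsupp : HasCompactSupport φ) :
    ∃ C : ℝ, 0 < C ∧ ∀ r : ℝ, 0 < r → r ≤ 1 → ∀ η : EuclideanSpace ℝ (Fin d),
      ‖∫ ξ, (φ (r⁻¹ • (ξ + η)) : ℂ) * f ξ ∂μ‖ ≤
        C * Real.sqrt (∫ x, ‖invFourierMeasure μ f x‖ ^ 2 * (1 + ‖x‖) ^ (α - d)
            ∂(volume : Measure (EuclideanSpace ℝ (Fin d)))) * r ^ (α / 2) :=
  frostman_type_bound_general α hαd μ f hf hI φ hφ hφsupp

end
end

section
/- Let h : (−ε,ε) → ℝ be C² with h'' > 0. For Φ continuous and compactly supported on ℝ², with Φ̃(s,t) := Φ(s+t, h(s)+h(t)), one has ∬_{(−ε,ε)²} Φ̃(s,t)|h'(s)−h'(t)| ds dt = 2 ∬_{Γ+Γ} Φ(ξ,η) dξ dη, where Γ = {(s,h(s)) : s ∈ (−ε,ε)} and Γ+Γ is the Minkowski sum. -/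
open Set MeasureTheory
open scoped Pointwise

/-!
Write `I = (-ε, ε)` and `F(s, t) = (s + t, h s + h t)`, so that `Γ + Γ = F '' (I × I)` and `F`
is symmetric in `(s, t)`. Strict convexity of `h` makes `F` injective on `{s < t}`, where its
Jacobian determinant is `h'(t) - h'(s)`; the change of variables formula there gives the integral
over `F '' {s < t}`, which differs from `Γ + Γ` only by the image of the diagonal, a null set
(the differentiable image of a null set). By symmetry the integral over the square `I × I` is
twice the one over `{s < t}`.
-/

def ltPairs {α : Type*} [LT α] (s : Set α) : Set (α × α) := s ×ˢ s ∩ {p | p.1 < p.2}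

lemma measurableSet_ltPairs {s : Set ℝ} (hs : MeasurableSet s) : MeasurableSet (ltPairs s) :=
  (hs.prod hs).inter (measurableSet_lt measurable_fst measurable_snd)

def graphSum (h : ℝ → ℝ) (p : ℝ × ℝ) : ℝ × ℝ := (p.1 + p.2, h p.1 + h p.2)

lemma graphSum_swap (h : ℝ → ℝ) (p : ℝ × ℝ) : graphSum h p.swap = graphSum h p := by
  simp only [graphSum, Prod.fst_swap, Prod.snd_swap, add_comm]

lemma image_graph_add_image_graph (h : ℝ → ℝ) (I : Set ℝ) :
    (fun s => (s, h s)) '' I + (fun s => (s, h s)) '' I = graphSum h '' (I ×ˢ I) := by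
  rw [← image2_add, image2_image_left, image2_image_right, ← image_prod]
  rfl

lemma StrictConvexOn.injOn_graphSum {h : ℝ → ℝ} {I : Set ℝ} (hh : StrictConvexOn ℝ I h) :
    InjOn (graphSum h) (ltPairs I) := by
  rintro ⟨s, t⟩ ⟨⟨hs, ht⟩, hst⟩ ⟨s', t'⟩ ⟨⟨hs', ht'⟩, hst'⟩ heq
  simp only [graphSum, Prod.mk.injEq, mem_ofPred_eq] at heq hst hst'
  wlog htt' : t ≤ t' generalizing s t s' t'
  · exact (this s' t' hst' hs' ht' s t hst hs ht ⟨heq.1.symm, heq.2.symm⟩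
      (le_of_not_ge htt')).symm
  obtain rfl | htt' := htt'.eq_or_lt
  · exact Prod.ext (by linarith [heq.1]) rfl
  -- `s' < s < t < t'` with `s - s' = t' - t`: the outer secants have equal slopes,
  -- while strict convexity makes the three consecutive slopes increase.
  have hs's : s' < s := by linarith [heq.1]
  have h₁ := hh.slope_strict_mono_adjacent hs' ht hs's hst
  have h₂ := hh.slope_strict_mono_adjacent hs ht' hst htt'
  have hslope : (h s - h s') / (s - s') = (h t' - h t) / (t' - t) := by
    rw [show h s - h s' = h t' - h t by linarith [heq.2], show s - s' = t' - t by linarith [heq.1]]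
  linarith

section Symmetry

variable {μ : Measure ℝ} {E : Type*} [NormedAddCommGroup E] {f : ℝ × ℝ → E}

lemma MeasureTheory.Measure.prod_self_diagonal_eq_zero {α : Type*} [MeasurableSpace α]
    [MeasurableEq α] (μ : Measure α) [SFinite μ] [NullSingletonClass μ] :
    μ.prod μ (diagonal α) = 0 := by
  refine (Measure.measure_prod_null measurableSet_diagonal).2 (ae_of_all _ fun x => ?_)
  have : Prod.mk x ⁻¹' diagonal α = {x} := by ext; simp [eq_comm]
  simp [this]

lemma prod_self_ae_eq_lt_union_gt [SFinite μ] [NullSingletonClass μ] (s : Set ℝ) :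
    s ×ˢ s =ᵐ[μ.prod μ] (ltPairs s ∪ Prod.swap ⁻¹' ltPairs s : Set (ℝ × ℝ)) := by
  refine Filter.EventuallyLE.antisymm ?_ (LE.le.eventuallyLE ?_)
  · refine ae_le_set.2 (measure_mono_null ?_ (Measure.prod_self_diagonal_eq_zero μ))
    rintro ⟨x, y⟩ ⟨hxy, hnot⟩
    simp only [ltPairs, mem_union, mem_inter_iff, mem_preimage, Prod.swap_prod_mk, mem_prod,
      mem_ofPred_eq] at hxy hnot ⊢
    exact le_antisymm (not_lt.1 fun h => hnot (.inr ⟨⟨hxy.2, hxy.1⟩, h⟩))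
      (not_lt.1 fun h => hnot (.inl ⟨hxy, h⟩))
  · exact union_subset inter_subset_left fun p hp => ⟨hp.1.2, hp.1.1⟩

lemma setIntegral_preimage_swap [NormedSpace ℝ E] [SFinite μ] (hf : ∀ p, f p.swap = f p)
    (t : Set (ℝ × ℝ)) :
    ∫ p in Prod.swap ⁻¹' t, f p ∂μ.prod μ = ∫ p in t, f p ∂μ.prod μ := by
  simpa only [hf] using Measure.measurePreserving_swap.setIntegral_preimage_emb
    MeasurableEquiv.prodComm.measurableEmbedding f t

lemma integrableOn_preimage_swap_iff [SFinite μ] (hf : ∀ p, f p.swap = f p) (t : Set (ℝ × ℝ)) :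
    IntegrableOn f (Prod.swap ⁻¹' t) (μ.prod μ) ↔ IntegrableOn f t (μ.prod μ) := by
  simpa only [Function.comp_def, hf] using Measure.measurePreserving_swap.integrableOn_comp_preimage
    MeasurableEquiv.prodComm.measurableEmbedding (f := f) (s := t)

lemma setIntegral_prod_self_eq_two_mul [NormedSpace ℝ E] [SFinite μ] [NullSingletonClass μ]
    (hf : ∀ p, f p.swap = f p) {s : Set ℝ} (hs : MeasurableSet s)
    (hfi : IntegrableOn f (ltPairs s) (μ.prod μ)) :
    ∫ p in s ×ˢ s, f p ∂μ.prod μ = (2 : ℝ) • ∫ p in ltPairs s, f p ∂μ.prod μ := by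
  have hdisj : Disjoint (ltPairs s) (Prod.swap ⁻¹' ltPairs s) :=
    disjoint_left.2 fun p hp hp' => lt_asymm (a := p.1) hp.2 hp'.2
  rw [setIntegral_congr_set (prod_self_ae_eq_lt_union_gt s),
    setIntegral_union hdisj (measurable_swap (measurableSet_ltPairs hs)) hfi
      ((integrableOn_preimage_swap_iff hf _).2 hfi),
    setIntegral_preimage_swap hf, two_smul]

lemma integrableOn_prod_self_of_lt [SFinite μ] [NullSingletonClass μ]
    (hf : ∀ p, f p.swap = f p) {s : Set ℝ}
    (hfi : IntegrableOn f (ltPairs s) (μ.prod μ)) :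
    IntegrableOn f (s ×ˢ s) (μ.prod μ) :=
  (hfi.union ((integrableOn_preimage_swap_iff hf _).2 hfi)).congr_set_ae
    (prod_self_ae_eq_lt_union_gt s)

end Symmetry

noncomputable def graphSumFDeriv (h' : ℝ → ℝ) (p : ℝ × ℝ) : ℝ × ℝ →L[ℝ] ℝ × ℝ :=
  LinearMap.toContinuousLinearMap <| Matrix.toLin (Module.Basis.finTwoProd ℝ)
    (Module.Basis.finTwoProd ℝ) !![1, 1; h' p.1, h' p.2]

lemma det_graphSumFDeriv (h' : ℝ → ℝ) (p : ℝ × ℝ) :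
    (graphSumFDeriv h' p).det = h' p.2 - h' p.1 := by
  simp only [graphSumFDeriv, LinearMap.det_toContinuousLinearMap, LinearMap.det_toLin,
    Matrix.det_fin_two_of]
  ring

lemma hasFDerivAt_graphSum {h h' : ℝ → ℝ} {p : ℝ × ℝ} (h₁ : HasDerivAt h (h' p.1) p.1)
    (h₂ : HasDerivAt h (h' p.2) p.2) : HasFDerivAt (graphSum h) (graphSumFDeriv h' p) p := by
  rw [graphSumFDeriv, Matrix.toLin_finTwoProd_toContinuousLinearMap]
  refine ((hasFDerivAt_fst.add hasFDerivAt_snd).prodMk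
    ((h₁.comp_hasFDerivAt p (hasFDerivAt_fst (p := p))).add
      (h₂.comp_hasFDerivAt p (hasFDerivAt_snd (p := p))))).congr_fderiv ?_
  ext <;> simp

section ChangeOfVariables

variable {h h' : ℝ → ℝ} {I : Set ℝ}

lemma abs_det_graphSumFDeriv_smul (Φ : ℝ × ℝ → ℝ) :
    (fun p => |(graphSumFDeriv h' p).det| • Φ (graphSum h p)) =
      fun p => Φ (graphSum h p) * |h' p.1 - h' p.2| := by
  ext p
  rw [det_graphSumFDeriv, abs_sub_comm, smul_eq_mul, mul_comm]

lemma integrableOn_image_graphSum_iff (hI : MeasurableSet I)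
    (hder : ∀ x ∈ I, HasDerivAt h (h' x) x) (hconv : StrictConvexOn ℝ I h) (Φ : ℝ × ℝ → ℝ) :
    IntegrableOn Φ (graphSum h '' ltPairs I) ↔
      IntegrableOn (fun p => Φ (graphSum h p) * |h' p.1 - h' p.2|) (ltPairs I) := by
  rw [integrableOn_image_iff_integrableOn_abs_det_fderiv_smul volume
    (measurableSet_ltPairs hI)
    (fun p hp => (hasFDerivAt_graphSum (hder _ hp.1.1) (hder _ hp.1.2)).hasFDerivWithinAt)
    hconv.injOn_graphSum, abs_det_graphSumFDeriv_smul]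

lemma setIntegral_image_graphSum (hI : MeasurableSet I)
    (hder : ∀ x ∈ I, HasDerivAt h (h' x) x) (hconv : StrictConvexOn ℝ I h) (Φ : ℝ × ℝ → ℝ) :
    ∫ p in graphSum h '' ltPairs I, Φ p =
      ∫ p in ltPairs I, Φ (graphSum h p) * |h' p.1 - h' p.2| := by
  rw [integral_image_eq_integral_abs_det_fderiv_smul volume
    (measurableSet_ltPairs hI)
    (fun p hp => (hasFDerivAt_graphSum (hder _ hp.1.1) (hder _ hp.1.2)).hasFDerivWithinAt)
    hconv.injOn_graphSum, abs_det_graphSumFDeriv_smul]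

lemma graphSum_image_prod_ae_eq (hd : DifferentiableOn ℝ h I) :
    graphSum h '' (I ×ˢ I) =ᵐ[volume] graphSum h '' ltPairs I := by
  refine Filter.EventuallyLE.antisymm ?_ (LE.le.eventuallyLE (image_mono inter_subset_left))
  have hdiag : volume (I ×ˢ I ∩ diagonal ℝ) = 0 := by
    rw [Measure.volume_eq_prod]
    exact measure_mono_null inter_subset_right (Measure.prod_self_diagonal_eq_zero volume)
  have hdiff : DifferentiableOn ℝ (graphSum h) (I ×ˢ I) := fun p hp =>
    (differentiableWithinAt_fst.add differentiableWithinAt_snd).prodMk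
      (((hd _ hp.1).comp p differentiableWithinAt_fst fun _ hq => hq.1).add
        ((hd _ hp.2).comp p differentiableWithinAt_snd fun _ hq => hq.2))
  refine ae_le_set.2 (measure_mono_null ?_
    (addHaar_image_eq_zero_of_differentiableOn_of_addHaar_eq_zero volume
      (hdiff.mono inter_subset_left) hdiag))
  rintro _ ⟨⟨p, hp, rfl⟩, hnot⟩
  rcases lt_trichotomy p.1 p.2 with hlt | heq | hgt
  · exact absurd ⟨p, ⟨hp, hlt⟩, rfl⟩ hnot
  · exact ⟨p, ⟨hp, heq⟩, rfl⟩
  · exact absurd ⟨p.swap, ⟨⟨hp.2, hp.1⟩, hgt⟩, graphSum_swap h p⟩ hnot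

end ChangeOfVariables

theorem integral_change_of_variables_sum_graph_general {ε : ℝ} (h : ℝ → ℝ)
    (hC2 : ContDiffOn ℝ 2 h (Ioo (-ε) ε))
    (hconv : ∀ x ∈ Ioo (-ε) ε, 0 < deriv (deriv h) x)
    (Φ : ℝ × ℝ → ℝ) (hΦ : Continuous Φ) (hΦsupp : HasCompactSupport Φ) :
    ∫ s in Ioo (-ε) ε, ∫ t in Ioo (-ε) ε,
        Φ (s + t, h s + h t) * |deriv h s - deriv h t| =
      2 * ∫ p in ((fun s => (s, h s)) '' Ioo (-ε) ε + (fun s => (s, h s)) '' Ioo (-ε) ε),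
        Φ p := by
  set I := Ioo (-ε) ε
  have hd : DifferentiableOn ℝ h I := hC2.differentiableOn two_ne_zero
  have hder : ∀ x ∈ I, HasDerivAt h (deriv h x) x := fun x hx =>
    ((hd x hx).differentiableAt (isOpen_Ioo.mem_nhds hx)).hasDerivAt
  have hstrict : StrictConvexOn ℝ I h :=
    strictConvexOn_of_deriv2_pos (convex_Ioo _ _) hC2.continuousOn (by rwa [interior_Ioo])
  set f := fun p : ℝ × ℝ => Φ (graphSum h p) * |deriv h p.1 - deriv h p.2|
  have hf_swap : ∀ p, f p.swap = f p := fun p => by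
    simp only [f, graphSum_swap, Prod.fst_swap, Prod.snd_swap, abs_sub_comm]
  have hfU : IntegrableOn f (ltPairs I) :=
    (integrableOn_image_graphSum_iff measurableSet_Ioo hder hstrict Φ).1
      (hΦ.integrable_of_hasCompactSupport hΦsupp).integrableOn
  rw [Measure.volume_eq_prod] at hfU
  rw [image_graph_add_image_graph, setIntegral_congr_set (graphSum_image_prod_ae_eq hd),
    setIntegral_image_graphSum measurableSet_Ioo hder hstrict, Measure.volume_eq_prod,
    ← smul_eq_mul, ← setIntegral_prod_self_eq_two_mul hf_swap measurableSet_Ioo hfU,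
    setIntegral_prod _ (integrableOn_prod_self_of_lt hf_swap hfU)]
  rfl

/-- Change of variables: for `h : (-ε,ε) → ℝ` of class `C²` with `h'' > 0`, and `Φ`
continuous with compact support on `ℝ²`, with `Φ̃(s,t) = Φ(s+t, h(s)+h(t))`,
`∬ Φ̃(s,t)|h'(s)-h'(t)| ds dt = 2 ∬_{Γ+Γ} Φ(ξ,η) dξ dη` where `Γ` is the graph of `h`
and `Γ+Γ` its Minkowski sum with itself. -/
theorem integral_change_of_variables_sum_graph {ε : ℝ} (hε : 0 < ε) (h : ℝ → ℝ)
    (hC2 : ContDiffOn ℝ 2 h (Ioo (-ε) ε))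
    (hconv : ∀ x ∈ Ioo (-ε) ε, 0 < deriv (deriv h) x)
    (Φ : ℝ × ℝ → ℝ) (hΦ : Continuous Φ) (hΦsupp : HasCompactSupport Φ) :
    ∫ s in Ioo (-ε) ε, ∫ t in Ioo (-ε) ε,
        Φ (s + t, h s + h t) * |deriv h s - deriv h t| =
      2 * ∫ p in ((fun s => (s, h s)) '' Ioo (-ε) ε + (fun s => (s, h s)) '' Ioo (-ε) ε),
        Φ p :=
  integral_change_of_variables_sum_graph_general h hC2 hconv Φ hΦ hΦsupp
end

section
/- Let h : (−ε,ε) → ℝ be C² with h(0) = h'(0) = 0 and h'' bounded between two positive constants c ≤ h'' ≤ C. For N ≥ 1 and an interval I ⊂ (−ε,ε), define S_N = {(s+t, h(s)+h(t)) : s,t ∈ I, 1/N ≤ t−s ≤ 1.1/N}. Then the planar Lebesgue measure of S_N satisfies |S_N| ≍ N^{−2} (with implicit constants depending only on c, C, |I|), and for (s,t) with 1/N ≤ t−s ≤ 1.1/N one has |h'(s) − h'(t)| ≍ N^{−1}. -/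
/-!
The map `(s, t) ↦ (s + t, h s + h t)` has Jacobian determinant `h' t - h' s`, which by the mean
value theorem lies between `c (t - s)` and `C (t - s)`, i.e. is `≍ 1/N` on the strip
`1/N ≤ t - s ≤ 1.1/N`. Strict convexity of `h` makes the map injective on `{s < t}`: nested
chords of its graph with a common midpoint have different midpoint heights. The change of
variables formula then gives `|S_N| ≍ N⁻¹ · |strip| ≍ N⁻²`, the strip having area
`≍ (b - a) · 0.1/N`.
-/

open Set MeasureTheory

def sumMap (h : ℝ → ℝ) (p : ℝ × ℝ) : ℝ × ℝ := (p.1 + p.2, h p.1 + h p.2)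

noncomputable def sumMapCLM (p q : ℝ) : ℝ × ℝ →L[ℝ] ℝ × ℝ :=
  (ContinuousLinearMap.fst ℝ ℝ ℝ + ContinuousLinearMap.snd ℝ ℝ ℝ).prod
    (p • ContinuousLinearMap.fst ℝ ℝ ℝ + q • ContinuousLinearMap.snd ℝ ℝ ℝ)

theorem det_sumMapCLM (p q : ℝ) : (sumMapCLM p q).det = q - p := by
  rw [ContinuousLinearMap.det, ← LinearMap.det_toMatrix (Module.Basis.finTwoProd ℝ),
    Matrix.det_fin_two]
  simp [LinearMap.toMatrix_apply, sumMapCLM]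

theorem hasFDerivAt_sumMap {h : ℝ → ℝ} {p : ℝ × ℝ} {d₁ d₂ : ℝ}
    (h₁ : HasDerivAt h d₁ p.1) (h₂ : HasDerivAt h d₂ p.2) :
    HasFDerivAt (sumMap h) (sumMapCLM d₁ d₂) p := by
  have hf₁ := h₁.hasFDerivAt.comp p hasFDerivAt_fst
  have hf₂ := h₂.hasFDerivAt.comp p hasFDerivAt_snd
  refine ((hasFDerivAt_fst.add hasFDerivAt_snd).prodMk (hf₁.add hf₂)).congr_fderiv ?_
  ext <;> simp [sumMapCLM, mul_comm]

theorem StrictConvexOn.add_lt_add_of_sum_eq {D : Set ℝ} {f : ℝ → ℝ}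
    (hf : StrictConvexOn ℝ D f) {x y u v : ℝ} (hx : x ∈ D) (hy : y ∈ D)
    (hxu : x < u) (huy : u < y) (hsum : u + v = x + y) : f u + f v < f x + f y := by
  set θ := (y - u) / (y - x)
  have hyx : 0 < y - x := by linarith
  have hθ : 0 < θ := div_pos (by linarith) hyx
  have hθ' : 0 < 1 - θ := by
    rw [sub_pos, div_lt_one hyx]; linarith
  have hu : θ • x + (1 - θ) • y = u := by
    simp only [smul_eq_mul, θ]; field_simp; ring
  have hv : (1 - θ) • x + θ • y = v := by
    simp only [smul_eq_mul] at hu ⊢; linarith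
  have h₁ := hf.2 hx hy (hxu.trans huy).ne hθ hθ' (by ring)
  have h₂ := hf.2 hx hy (hxu.trans huy).ne hθ' hθ (by ring)
  rw [hu] at h₁; rw [hv] at h₂
  simp only [smul_eq_mul] at h₁ h₂
  linarith

theorem Convex.mul_sub_le_sub_le_mul_sub {D : Set ℝ} (hD : Convex ℝ D) {f : ℝ → ℝ}
    (hf : DifferentiableOn ℝ f D) {c C : ℝ}
    (hf' : ∀ x ∈ interior D, c ≤ deriv f x ∧ deriv f x ≤ C) {x y : ℝ} (hx : x ∈ D) (hy : y ∈ D)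
    (hxy : x ≤ y) : c * (y - x) ≤ f y - f x ∧ f y - f x ≤ C * (y - x) :=
  ⟨hD.mul_sub_le_image_sub_of_le_deriv hf.continuousOn (hf.mono interior_subset)
      (fun z hz ↦ (hf' z hz).1) x hx y hy hxy,
    hD.image_sub_le_mul_sub_of_deriv_le hf.continuousOn (hf.mono interior_subset)
      (fun z hz ↦ (hf' z hz).2) x hx y hy hxy⟩

theorem StrictConvexOn.injOn_sumMap {D : Set ℝ} {h : ℝ → ℝ} (hh : StrictConvexOn ℝ D h) :
    InjOn (sumMap h) {p : ℝ × ℝ | p.1 ∈ D ∧ p.2 ∈ D ∧ p.1 < p.2} := by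
  rintro ⟨s, t⟩ ⟨hs, ht, hst⟩ ⟨s', t'⟩ ⟨hs', ht', hst'⟩ heq
  simp only [sumMap, Prod.mk.injEq] at heq ⊢
  obtain ⟨hsum, hh_eq⟩ := heq
  rcases lt_trichotomy s s' with hlt | rfl | hgt
  · have := hh.add_lt_add_of_sum_eq hs ht hlt (by linarith) hsum.symm
    linarith
  · exact ⟨rfl, by linarith⟩
  · have := hh.add_lt_add_of_sum_eq hs' ht' hgt (by linarith) hsum
    linarith

def diagStrip (a b δ₁ δ₂ : ℝ) : Set (ℝ × ℝ) :=
  {p | p.1 ∈ Icc a b ∧ p.2 ∈ Icc a b ∧ δ₁ ≤ p.2 - p.1 ∧ p.2 - p.1 ≤ δ₂}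

section diagStrip
variable {a b δ₁ δ₂ : ℝ}

theorem measurableSet_diagStrip : MeasurableSet (diagStrip a b δ₁ δ₂) :=
  (measurableSet_Icc.preimage measurable_fst).inter <|
    (measurableSet_Icc.preimage measurable_snd).inter <|
      (measurableSet_le measurable_const (measurable_snd.sub measurable_fst)).inter
        (measurableSet_le (measurable_snd.sub measurable_fst) measurable_const)

theorem volume_diagStrip_eq_lintegral :
    volume (diagStrip a b δ₁ δ₂) = ∫⁻ x, volume (Prod.mk x ⁻¹' diagStrip a b δ₁ δ₂) := by
  rw [Measure.volume_eq_prod, Measure.prod_apply measurableSet_diagStrip]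

theorem volume_diagStrip_le :
    volume (diagStrip a b δ₁ δ₂) ≤ ENNReal.ofReal (b - a) * ENNReal.ofReal (δ₂ - δ₁) := by
  have slice (x : ℝ) : volume (Prod.mk x ⁻¹' diagStrip a b δ₁ δ₂)
      ≤ (Icc a b).indicator (fun _ ↦ ENNReal.ofReal (δ₂ - δ₁)) x := by
    by_cases hx : x ∈ Icc a b
    · rw [indicator_of_mem hx]
      calc volume (Prod.mk x ⁻¹' diagStrip a b δ₁ δ₂)
          ≤ volume (Icc (x + δ₁) (x + δ₂)) :=
            measure_mono fun t ⟨_, _, h₁, h₂⟩ ↦ ⟨by linarith, by linarith⟩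
        _ = ENNReal.ofReal (δ₂ - δ₁) := by rw [Real.volume_Icc]; ring_nf
    · rw [indicator_of_notMem hx]
      exact (measure_mono fun t ht ↦ absurd ht.1 hx).trans (measure_empty (μ := volume)).le
  calc volume (diagStrip a b δ₁ δ₂)
      ≤ ∫⁻ x, (Icc a b).indicator (fun _ ↦ ENNReal.ofReal (δ₂ - δ₁)) x :=
        volume_diagStrip_eq_lintegral.trans_le (lintegral_mono slice)
    _ = _ := by
        rw [lintegral_indicator measurableSet_Icc, setLIntegral_const, Real.volume_Icc, mul_comm]

theorem le_volume_diagStrip (hδ₁ : 0 ≤ δ₁) :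
    ENNReal.ofReal (b - δ₂ - a) * ENNReal.ofReal (δ₂ - δ₁) ≤ volume (diagStrip a b δ₁ δ₂) := by
  have slice (x : ℝ) : (Icc a (b - δ₂)).indicator (fun _ ↦ ENNReal.ofReal (δ₂ - δ₁)) x
      ≤ volume (Prod.mk x ⁻¹' diagStrip a b δ₁ δ₂) := by
    by_cases hx : x ∈ Icc a (b - δ₂)
    · rw [indicator_of_mem hx]
      calc ENNReal.ofReal (δ₂ - δ₁) = volume (Icc (x + δ₁) (x + δ₂)) := by
            rw [Real.volume_Icc]; ring_nf
        _ ≤ volume (Prod.mk x ⁻¹' diagStrip a b δ₁ δ₂) := by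
            refine measure_mono fun t ⟨h₁, h₂⟩ ↦ ?_
            obtain ⟨hax, hxb⟩ := hx
            exact ⟨⟨hax, by linarith⟩, ⟨by linarith, by linarith⟩, by linarith, by linarith⟩
    · rw [indicator_of_notMem hx]
      exact zero_le
  calc ENNReal.ofReal (b - δ₂ - a) * ENNReal.ofReal (δ₂ - δ₁)
      = ∫⁻ x, (Icc a (b - δ₂)).indicator (fun _ ↦ ENNReal.ofReal (δ₂ - δ₁)) x := by
        rw [lintegral_indicator measurableSet_Icc, setLIntegral_const, Real.volume_Icc, mul_comm]
    _ ≤ volume (diagStrip a b δ₁ δ₂) :=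
        (lintegral_mono slice).trans_eq volume_diagStrip_eq_lintegral.symm

end diagStrip

theorem volume_image_sumMap {h h' : ℝ → ℝ} {D : Set (ℝ × ℝ)} (hD : MeasurableSet D)
    (hh' : ∀ p ∈ D, HasDerivAt h (h' p.1) p.1 ∧ HasDerivAt h (h' p.2) p.2)
    (hinj : InjOn (sumMap h) D) :
    volume (sumMap h '' D) = ∫⁻ p in D, ENNReal.ofReal |h' p.2 - h' p.1| := by
  have := lintegral_image_eq_lintegral_abs_det_fderiv_mul volume hD
    (fun p hp ↦ (hasFDerivAt_sumMap (hh' p hp).1 (hh' p hp).2).hasFDerivWithinAt) hinj 1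
  simpa [det_sumMapCLM] using this

section slopeBounds
variable {h h' : ℝ → ℝ} {a b c C δ₁ δ₂ : ℝ}
  (hslope : ∀ s ∈ Icc a b, ∀ t ∈ Icc a b, s ≤ t →
    c * (t - s) ≤ h' t - h' s ∧ h' t - h' s ≤ C * (t - s))
include hslope

theorem abs_sub_bounds_of_mem_diagStrip (hc : 0 ≤ c) (hC : 0 ≤ C) (hδ₁ : 0 ≤ δ₁) {p : ℝ × ℝ}
    (hp : p ∈ diagStrip a b δ₁ δ₂) :
    c * δ₁ ≤ |h' p.2 - h' p.1| ∧ |h' p.2 - h' p.1| ≤ C * δ₂ := by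
  obtain ⟨hs, ht, h₁, h₂⟩ := hp
  obtain ⟨hlow, hup⟩ := hslope _ hs _ ht (by linarith)
  rw [abs_of_nonneg (by nlinarith)]
  exact ⟨by nlinarith, by nlinarith⟩

theorem volume_image_diagStrip_bounds (hderiv : ∀ x ∈ Icc a b, HasDerivAt h (h' x) x)
    (hconv : StrictConvexOn ℝ (Icc a b) h) (hc : 0 ≤ c) (hC : 0 ≤ C)
    (hδ₁ : 0 < δ₁) (hδ₂ : δ₁ ≤ δ₂) (hδb : δ₂ ≤ b - a) :
    ENNReal.ofReal (c * δ₁ * ((b - δ₂ - a) * (δ₂ - δ₁)))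
        ≤ volume (sumMap h '' diagStrip a b δ₁ δ₂) ∧
      volume (sumMap h '' diagStrip a b δ₁ δ₂)
        ≤ ENNReal.ofReal (C * δ₂ * ((b - a) * (δ₂ - δ₁))) := by
  have hsub : diagStrip a b δ₁ δ₂ ⊆ {p | p.1 ∈ Icc a b ∧ p.2 ∈ Icc a b ∧ p.1 < p.2} :=
    fun p ⟨hs, ht, h₁, _⟩ ↦ ⟨hs, ht, by linarith⟩
  have hJ : ∀ p ∈ diagStrip a b δ₁ δ₂,
      c * δ₁ ≤ |h' p.2 - h' p.1| ∧ |h' p.2 - h' p.1| ≤ C * δ₂ :=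
    fun p hp ↦ abs_sub_bounds_of_mem_diagStrip hslope hc hC hδ₁.le hp
  rw [volume_image_sumMap measurableSet_diagStrip (fun p hp ↦ ⟨hderiv _ hp.1, hderiv _ hp.2.1⟩)
    (hconv.injOn_sumMap.mono hsub)]
  constructor
  · calc ENNReal.ofReal (c * δ₁ * ((b - δ₂ - a) * (δ₂ - δ₁)))
        ≤ ENNReal.ofReal (c * δ₁) * volume (diagStrip a b δ₁ δ₂) := by
          rw [ENNReal.ofReal_mul (by positivity : 0 ≤ c * δ₁),
            ENNReal.ofReal_mul (by linarith : 0 ≤ b - δ₂ - a)]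
          exact mul_le_mul_right (le_volume_diagStrip hδ₁.le) _
      _ = ∫⁻ _ in diagStrip a b δ₁ δ₂, ENNReal.ofReal (c * δ₁) := (setLIntegral_const _ _).symm
      _ ≤ _ := setLIntegral_mono' measurableSet_diagStrip fun p hp ↦
          ENNReal.ofReal_le_ofReal (hJ p hp).1
  · calc ∫⁻ p in diagStrip a b δ₁ δ₂, ENNReal.ofReal |h' p.2 - h' p.1|
        ≤ ∫⁻ _ in diagStrip a b δ₁ δ₂, ENNReal.ofReal (C * δ₂) :=
          setLIntegral_mono' measurableSet_diagStrip fun p hp ↦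
            ENNReal.ofReal_le_ofReal (hJ p hp).2
      _ = ENNReal.ofReal (C * δ₂) * volume (diagStrip a b δ₁ δ₂) := setLIntegral_const _ _
      _ ≤ _ := by
          rw [ENNReal.ofReal_mul (mul_nonneg hC (by linarith) : 0 ≤ C * δ₂),
            ENNReal.ofReal_mul (by linarith : 0 ≤ b - a)]
          exact mul_le_mul_right volume_diagStrip_le _

theorem toReal_volume_image_diagStrip_bounds (hderiv : ∀ x ∈ Icc a b, HasDerivAt h (h' x) x)
    (hconv : StrictConvexOn ℝ (Icc a b) h) (hc : 0 ≤ c) (hC : 0 ≤ C) (hab : a < b) {N : ℝ}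
    (hN : 2.2 / (b - a) ≤ N) :
    c * (b - a) / 20 / N ^ 2 ≤ (volume (sumMap h '' diagStrip a b (1 / N) (1.1 / N))).toReal ∧
      (volume (sumMap h '' diagStrip a b (1 / N) (1.1 / N))).toReal
        ≤ 0.11 * C * (b - a) / N ^ 2 := by
  have hba : 0 < b - a := by linarith
  have hNpos : 0 < N := (div_pos (by norm_num) hba).trans_le hN
  have hNb : 1.1 / N ≤ (b - a) / 2 := by
    rw [div_le_iff₀ hba] at hN
    rw [div_le_iff₀ hNpos]; linarith
  obtain ⟨hlow, hup⟩ := volume_image_diagStrip_bounds (δ₁ := 1 / N) (δ₂ := 1.1 / N) hslope hderiv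
    hconv hc hC (by positivity) (by gcongr; norm_num) (by linarith)
  constructor
  · rw [← ENNReal.ofReal_le_iff_le_toReal (hup.trans_lt ENNReal.ofReal_lt_top).ne]
    refine le_trans (ENNReal.ofReal_le_ofReal ?_) hlow
    calc c * (b - a) / 20 / N ^ 2 = c * (1 / N) * ((b - a) / 2 * (1.1 / N - 1 / N)) := by
          field_simp; ring
      _ ≤ c * (1 / N) * ((b - 1.1 / N - a) * (1.1 / N - 1 / N)) := by
          gcongr
          · rw [sub_nonneg]; gcongr; norm_num
          · linarith
  · refine ENNReal.toReal_le_of_le_ofReal (by positivity) (hup.trans_eq ?_)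
    congr 1; field_simp; ring

end slopeBounds

theorem measure_SN_asymp_general {ε : ℝ} (h : ℝ → ℝ)
    (hC2 : ContDiffOn ℝ 2 h (Ioo (-ε) ε))
    (c C : ℝ) (hc : 0 < c)
    (hcC : ∀ x ∈ Ioo (-ε) ε, c ≤ deriv (deriv h) x ∧ deriv (deriv h) x ≤ C)
    (a b : ℝ) (hab : a < b) (hI : Icc a b ⊆ Ioo (-ε) ε) :
    ∃ K₁ K₂ N₀ : ℝ, 0 < K₁ ∧ 0 < K₂ ∧ 0 < N₀ ∧ ∀ N : ℝ, N₀ ≤ N →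
      (K₁ / N ^ 2 ≤ (volume ((fun p : ℝ × ℝ => (p.1 + p.2, h p.1 + h p.2)) ''
          {p : ℝ × ℝ | p.1 ∈ Icc a b ∧ p.2 ∈ Icc a b ∧
            1 / N ≤ p.2 - p.1 ∧ p.2 - p.1 ≤ 1.1 / N})).toReal ∧
        (volume ((fun p : ℝ × ℝ => (p.1 + p.2, h p.1 + h p.2)) ''
          {p : ℝ × ℝ | p.1 ∈ Icc a b ∧ p.2 ∈ Icc a b ∧
            1 / N ≤ p.2 - p.1 ∧ p.2 - p.1 ≤ 1.1 / N})).toReal ≤ K₂ / N ^ 2) ∧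
      ∀ s ∈ Icc a b, ∀ t ∈ Icc a b, 1 / N ≤ t - s → t - s ≤ 1.1 / N →
        K₁ / N ≤ |deriv h s - deriv h t| ∧ |deriv h s - deriv h t| ≤ K₂ / N := by
  have hderiv (x : ℝ) (hx : x ∈ Icc a b) : HasDerivAt h (deriv h x) x :=
    ((hC2.differentiableOn (by norm_num) x (hI hx)).differentiableAt
      (isOpen_Ioo.mem_nhds (hI hx))).hasDerivAt
  have hconv : StrictConvexOn ℝ (Icc a b) h :=
    strictConvexOn_of_deriv2_pos (convex_Icc a b)
      (fun x hx ↦ (hderiv x hx).continuousAt.continuousWithinAt)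
      fun x hx ↦ by simpa using hc.trans_le (hcC x (hI (interior_subset hx))).1
  have hslope (s : ℝ) (hs : s ∈ Icc a b) (t : ℝ) (ht : t ∈ Icc a b) (hst : s ≤ t) :=
    (convex_Ioo (-ε) ε).mul_sub_le_sub_le_mul_sub
      ((hC2.deriv_of_isOpen isOpen_Ioo (by norm_num)).differentiableOn one_ne_zero)
      (fun x hx ↦ hcC x (interior_subset hx)) (hI hs) (hI ht) hst
  have hC : 0 < C := by
    obtain ⟨hca, haC⟩ := hcC a (hI (left_mem_Icc.2 hab.le))
    linarith
  refine ⟨min (c * (b - a) / 20) c, max (0.11 * C * (b - a)) (1.1 * C), 2.2 / (b - a),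
    by positivity, by positivity, div_pos (by norm_num) (by linarith), fun N hN ↦ ?_⟩
  have hNpos : 0 < N := (div_pos (by norm_num) (by linarith)).trans_le hN
  obtain ⟨hlow, hup⟩ := toReal_volume_image_diagStrip_bounds hslope hderiv hconv hc.le hC.le hab hN
  refine ⟨⟨le_trans (by gcongr; exact min_le_left _ _) hlow,
    hup.trans (by gcongr; exact le_max_left _ _)⟩, fun s hs t ht h₁ h₂ ↦ ?_⟩
  obtain ⟨hl, hu⟩ := abs_sub_bounds_of_mem_diagStrip hslope hc.le hC.le (by positivity)
    (p := (s, t)) ⟨hs, ht, h₁, h₂⟩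
  rw [abs_sub_comm]
  constructor
  · calc min (c * (b - a) / 20) c / N ≤ c * (1 / N) := by
          rw [mul_one_div]; gcongr; exact min_le_right _ _
      _ ≤ _ := hl
  · calc _ ≤ C * (1.1 / N) := hu
      _ ≤ _ := by rw [← mul_div_assoc, mul_comm]; gcongr; exact le_max_right _ _

/-- For `h` of class `C²` on `(-ε,ε)` with `h(0) = h'(0) = 0` and `c ≤ h'' ≤ C`
(`0 < c`), and an interval `I = [a,b] ⊆ (-ε,ε)`, the sets
`S_N = {(s+t, h(s)+h(t)) : s,t ∈ I, 1/N ≤ t-s ≤ 1.1/N}` satisfy `|S_N| ≍ N⁻²`, and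
`|h'(s) - h'(t)| ≍ N⁻¹` whenever `1/N ≤ t-s ≤ 1.1/N`, for all sufficiently large `N`. -/
theorem measure_SN_asymp {ε : ℝ} (hε : 0 < ε) (h : ℝ → ℝ)
    (hC2 : ContDiffOn ℝ 2 h (Ioo (-ε) ε)) (h0 : h 0 = 0) (h'0 : deriv h 0 = 0)
    (c C : ℝ) (hc : 0 < c)
    (hcC : ∀ x ∈ Ioo (-ε) ε, c ≤ deriv (deriv h) x ∧ deriv (deriv h) x ≤ C)
    (a b : ℝ) (hab : a < b) (hI : Icc a b ⊆ Ioo (-ε) ε) :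
    ∃ K₁ K₂ N₀ : ℝ, 0 < K₁ ∧ 0 < K₂ ∧ 0 < N₀ ∧ ∀ N : ℝ, N₀ ≤ N →
      (K₁ / N ^ 2 ≤ (volume ((fun p : ℝ × ℝ => (p.1 + p.2, h p.1 + h p.2)) ''
          {p : ℝ × ℝ | p.1 ∈ Icc a b ∧ p.2 ∈ Icc a b ∧
            1 / N ≤ p.2 - p.1 ∧ p.2 - p.1 ≤ 1.1 / N})).toReal ∧
        (volume ((fun p : ℝ × ℝ => (p.1 + p.2, h p.1 + h p.2)) ''
          {p : ℝ × ℝ | p.1 ∈ Icc a b ∧ p.2 ∈ Icc a b ∧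
            1 / N ≤ p.2 - p.1 ∧ p.2 - p.1 ≤ 1.1 / N})).toReal ≤ K₂ / N ^ 2) ∧
      ∀ s ∈ Icc a b, ∀ t ∈ Icc a b, 1 / N ≤ t - s → t - s ≤ 1.1 / N →
        K₁ / N ≤ |deriv h s - deriv h t| ∧ |deriv h s - deriv h t| ≤ K₂ / N :=
  measure_SN_asymp_general h hC2 c C hc hcC a b hab hI
end
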